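/- arXiv:1405.6083 — 6 statements merged into one kernel-verified Lean document; each statement's English description precedes it below -/
import Mathlib

section
/- Let A = Z/ℓ^{α₁} ⊕ ⋯ ⊕ Z/ℓ^{α_r} with α₁ ≥ ⋯ ≥ α_r > 0, viewed as a module over Z/ℓ^{α₁}. Then the number of alternating bilinear forms on A (as a Z/ℓ^{α₁}-module) equals ℓ^{Σ_{i=2}^r (i-1)α_i}. -/
/-!
An alternating biadditive form on `⊕ᵢ ZMod nᵢ` is determined by its blocks
`ZMod nᵢ × ZMod nⱼ → T` with `i < j`: the diagonal blocks vanish because each summand is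
cyclic, and the blocks below the diagonal are minus the transposes of those above.
Conversely every family of biadditive blocks above the diagonal occurs. If `nⱼ ∣ nᵢ` and
`T = ZMod N` with `nⱼ ∣ N`, a block is the choice of an element of `T` killed by `nⱼ`, and
there are `nⱼ` of those. For `nⱼ = ℓ ^ α j`, indexed from `0`, column `j` holds `j` blocks.
-/

abbrev AltForm (M T : Type*) [AddCommGroup M] [AddCommGroup T] :=
  {B : M →+ M →+ T // ∀ x, B x x = 0}

namespace AltForm

variable {M T : Type*} [AddCommGroup M] [AddCommGroup T]

variable (M T) in
def equivOfBiadditive :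
    {f : M → M → T // (∀ x y z, f (x + y) z = f x z + f y z) ∧
      (∀ x y z, f x (y + z) = f x y + f x z) ∧ ∀ x, f x x = 0} ≃ AltForm M T where
  toFun f := ⟨AddMonoidHom.mk' (fun x => AddMonoidHom.mk' (f.1 x) (f.2.2.1 x))
      (fun x y => AddMonoidHom.ext (f.2.1 x y)), f.2.2.2⟩
  invFun B := ⟨fun x y => B.1 x y, fun x y z => by simp, fun x y z => by simp, B.2⟩
  left_inv _ := rfl
  right_inv _ := rfl

theorem apply_swap (B : AltForm M T) (x y : M) : B.1 y x = -B.1 x y := by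
  have h := B.2 (x + y)
  simp only [map_add, AddMonoidHom.add_apply, B.2 x, B.2 y, zero_add, add_zero] at h
  exact eq_neg_of_add_eq_zero_left h

section Pi

variable {ι : Type*} [LinearOrder ι] {A : ι → Type*} [∀ i, AddCommGroup (A i)]

def toPairs (B : AltForm (∀ i, A i) T) (p : {p : ι × ι // p.1 < p.2}) :
    A p.1.1 →+ A p.1.2 →+ T :=
  (B.1.comp (AddMonoidHom.single A p.1.1)).compl₂ (AddMonoidHom.single A p.1.2)

def ofPairs [Fintype ι] (φ : ∀ p : {p : ι × ι // p.1 < p.2}, A p.1.1 →+ A p.1.2 →+ T) :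
    AltForm (∀ i, A i) T :=
  let C p := ((φ p).comp (Pi.evalAddMonoidHom A p.1.1)).compl₂ (Pi.evalAddMonoidHom A p.1.2)
  ⟨∑ p, (C p - (C p).flip), fun x => by simp⟩

theorem ofPairs_apply_single_single [Fintype ι]
    (φ : ∀ p : {p : ι × ι // p.1 < p.2}, A p.1.1 →+ A p.1.2 →+ T)
    {i j : ι} (hij : i < j) (a : A i) (b : A j) :
    (ofPairs φ).1 (Pi.single i a) (Pi.single j b) = φ ⟨(i, j), hij⟩ a b := by
  simp only [ofPairs, AddMonoidHom.finsetSum_apply, AddMonoidHom.sub_apply,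
    AddMonoidHom.flip_apply, AddMonoidHom.compl₂_apply, AddMonoidHom.comp_apply,
    Pi.evalAddMonoidHom_apply]
  rw [Finset.sum_eq_single ⟨(i, j), hij⟩]
  · simp [hij.ne']
  · rintro ⟨⟨k, l⟩, hkl⟩ - hne
    have h₁ : φ ⟨(k, l), hkl⟩ (Pi.single i a k) (Pi.single j b l) = 0 := by
      by_cases hk : k = i
      · subst hk
        have hl : l ≠ j := fun hl => hne (by subst hl; rfl)
        simp [hl]
      · simp [hk]
    have h₂ : φ ⟨(k, l), hkl⟩ (Pi.single j b k) (Pi.single i a l) = 0 := by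
      by_cases hk : k = j
      · subst hk
        simp [(hij.trans hkl).ne']
      · simp [hk]
    simp only [h₁, h₂, sub_zero]
  · simp

variable {n : ι → ℕ}

theorem apply_single_single_self (B : AltForm (∀ i, ZMod (n i)) T) (i : ι) (a b : ZMod (n i)) :
    B.1 (Pi.single i a) (Pi.single i b) = 0 := by
  have h (c : ZMod (n i)) :
      Pi.single i c = (c.cast : ℤ) • Pi.single (M := fun i => ZMod (n i)) i 1 := by
    rw [← Pi.single_smul, zsmul_one, ZMod.intCast_zmod_cast]
  simp only [h a, h b, map_zsmul, AddMonoidHom.zsmul_apply, B.2, smul_zero]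

theorem ext_of_lt [Finite ι] {B B' : AltForm (∀ i, ZMod (n i)) T}
    (h : ∀ i j, i < j → ∀ a b,
      B.1 (Pi.single i a) (Pi.single j b) = B'.1 (Pi.single i a) (Pi.single j b)) :
    B = B' := by
  refine Subtype.ext (AddMonoidHom.functions_ext _ _ _ fun i a => ?_)
  refine AddMonoidHom.functions_ext _ _ _ fun j b => ?_
  rcases lt_trichotomy i j with hij | rfl | hji
  · exact h i j hij a b
  · rw [apply_single_single_self, apply_single_single_self]
  · rw [apply_swap B, apply_swap B', h j i hji]

variable (n T) in
def piZModEquiv [Fintype ι] :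
    AltForm (∀ i, ZMod (n i)) T ≃
      ∀ p : {p : ι × ι // p.1 < p.2}, ZMod (n p.1.1) →+ ZMod (n p.1.2) →+ T where
  toFun := toPairs (A := fun i => ZMod (n i))
  invFun := ofPairs (A := fun i => ZMod (n i))
  left_inv B := ext_of_lt fun i j hij a b => by
    rw [ofPairs_apply_single_single _ hij]; rfl
  right_inv φ := by
    ext ⟨⟨i, j⟩, hij⟩ a b
    exact ofPairs_apply_single_single (A := fun i => ZMod (n i)) (i := i) (j := j) φ hij a b

end Pi

end AltForm

namespace ZMod

variable (m : ℕ) (G : Type*) [AddCommGroup G]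

def addMonoidHomEquiv : (ZMod m →+ G) ≃ {g : G // m • g = 0} :=
  (ZMod.lift m).symm.trans <| (Equiv.subtypeEquiv (zmultiplesHom G).symm fun f => by
    change f m = 0 ↔ m • f 1 = 0
    rw [← map_nsmul, nsmul_one])

theorem card_addMonoidHom_of_nsmul_eq_zero (h : ∀ g : G, m • g = 0) :
    Nat.card (ZMod m →+ G) = Nat.card G := by
  rw [Nat.card_congr (addMonoidHomEquiv m G), Nat.card_congr (Equiv.subtypeUnivEquiv h)]

theorem nsmul_addMonoidHom_eq_zero {n : ℕ} (f : ZMod n →+ G) : n • f = 0 := by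
  ext x
  rw [AddMonoidHom.nsmul_apply, ← map_nsmul, nsmul_eq_mul, natCast_self, zero_mul, map_zero,
    AddMonoidHom.zero_apply]

theorem card_nsmul_eq_zero {n N : ℕ} [NeZero N] (h : n ∣ N) :
    Nat.card {t : ZMod N // n • t = 0} = n := by
  classical
  have hn : 0 < n := Nat.pos_of_dvd_of_pos h (NeZero.pos N)
  apply le_antisymm
  · rw [Nat.card_eq_fintype_card, Fintype.card_subtype]
    exact IsAddCyclic.card_nsmul_eq_zero_le hn
  · have hg : addOrderOf ((N / n : ℕ) : ZMod N) = n := by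
      rw [addOrderOf_coe _ (NeZero.ne N), Nat.gcd_eq_right (Nat.div_dvd_of_dvd h),
        Nat.div_div_self h (NeZero.ne N)]
    have hle : AddSubgroup.zmultiples ((N / n : ℕ) : ZMod N) ≤ (nsmulAddMonoidHom n).ker := by
      rw [AddSubgroup.zmultiples_le, AddMonoidHom.mem_ker, nsmulAddMonoidHom_apply, nsmul_eq_mul,
        ← Nat.cast_mul, Nat.mul_div_cancel' h, natCast_self]
    calc n = Nat.card (AddSubgroup.zmultiples ((N / n : ℕ) : ZMod N)) := by
          rw [Nat.card_zmultiples, hg]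
      _ ≤ Nat.card (nsmulAddMonoidHom (α := ZMod N) n).ker := AddSubgroup.card_le_of_le hle
      _ = Nat.card {t : ZMod N // n • t = 0} := rfl

theorem card_addMonoidHom_addMonoidHom {m n N : ℕ} [NeZero N] (hnm : n ∣ m) (hnN : n ∣ N) :
    Nat.card (ZMod m →+ ZMod n →+ ZMod N) = n := by
  rw [card_addMonoidHom_of_nsmul_eq_zero, Nat.card_congr (addMonoidHomEquiv n _),
    card_nsmul_eq_zero hnN]
  intro φ
  obtain ⟨k, rfl⟩ := hnm
  rw [mul_nsmul', nsmul_addMonoidHom_eq_zero]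

end ZMod

theorem Fin.sum_pairs_lt_snd {M : Type*} [AddCommMonoid M] {r : ℕ} (f : Fin r → M) :
    ∑ p : {p : Fin r × Fin r // p.1 < p.2}, f p.1.2 = ∑ j : Fin r, (j : ℕ) • f j := by
  rw [← Finset.sum_subtype {p : Fin r × Fin r | p.1 < p.2} (by simp) (f ·.2), Finset.sum_filter,
    Fintype.sum_prod_type, Finset.sum_comm]
  refine Finset.sum_congr rfl fun j _ => ?_
  dsimp only
  rw [← Finset.sum_filter, Finset.sum_const, Finset.filter_gt_eq_Iio, Fin.card_Iio]

theorem card_alternating_forms_general (ℓ : ℕ) (hℓ : ℓ.Prime) (r : ℕ) (hr : 0 < r)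
    (α : Fin r → ℕ) (hanti : Antitone α) :
    Nat.card {f : (∀ i : Fin r, ZMod (ℓ ^ α i)) → (∀ i : Fin r, ZMod (ℓ ^ α i)) →
        ZMod (ℓ ^ α ⟨0, hr⟩) //
      (∀ x y z, f (x + y) z = f x z + f y z) ∧
      (∀ x y z, f x (y + z) = f x y + f x z) ∧
      (∀ x, f x x = 0)}
    = ℓ ^ (∑ i : Fin r, (i : ℕ) * α i) := by
  have : NeZero (ℓ ^ α ⟨0, hr⟩) := ⟨pow_ne_zero _ hℓ.ne_zero⟩
  have hdvd {i j : Fin r} (hij : i ≤ j) : ℓ ^ α j ∣ ℓ ^ α i := pow_dvd_pow ℓ (hanti hij)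
  rw [Nat.card_congr ((AltForm.equivOfBiadditive _ _).trans (AltForm.piZModEquiv _ _)),
    Nat.card_pi, Finset.prod_congr rfl fun p _ =>
      ZMod.card_addMonoidHom_addMonoidHom (hdvd p.2.le) (hdvd (i := ⟨0, hr⟩) (Nat.zero_le _)),
    Finset.prod_pow_eq_pow_sum, Fin.sum_pairs_lt_snd]
  simp only [smul_eq_mul]

/-- The number of alternating bilinear forms on
`A = Z/ℓ^{α₁} ⊕ ⋯ ⊕ Z/ℓ^{α_r}` (with `α₁ ≥ ⋯ ≥ α_r > 0`), viewed as a module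
over `Z/ℓ^{α₁} = Z/exp(A)`, is `ℓ^{Σ_{i=2}^r (i-1)α_i}`.  Since all groups in
sight are `Z/ℓ^{α₁}`-modules, `Z/ℓ^{α₁}`-bilinearity is equivalent to
biadditivity. -/
theorem card_alternating_forms (ℓ : ℕ) (hℓ : ℓ.Prime) (r : ℕ) (hr : 0 < r)
    (α : Fin r → ℕ) (hanti : Antitone α) (hpos : ∀ i, 0 < α i) :
    Nat.card {f : (∀ i : Fin r, ZMod (ℓ ^ α i)) → (∀ i : Fin r, ZMod (ℓ ^ α i)) →
        ZMod (ℓ ^ α ⟨0, hr⟩) //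
      (∀ x y z, f (x + y) z = f x z + f y z) ∧
      (∀ x y z, f x (y + z) = f x y + f x z) ∧
      (∀ x, f x x = 0)}
    = ℓ ^ (∑ i : Fin r, (i : ℕ) * α i) :=
  card_alternating_forms_general ℓ hℓ r hr α hanti
end

section
/- For an odd prime ℓ and q = ℓ^{-1}, Euler's identity holds: Σ_{i=1}^∞ q^{i(i+1)/2} / ((1−q)(1−q²)⋯(1−q^i)) = ∏_{i=1}^∞ (1 + q^i) − 1. -/
/-!
Put `F(x) = ∑ᵢ q^{i(i+1)/2} xⁱ / ((1-q)⋯(1-qⁱ))`. Comparing coefficients gives the functional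
equation `F(x) = (1 + q x) F(q x)`, so `F(1) = (∏_{j<n} (1 + q^{j+1})) F(qⁿ)` for every `n`; letting
`n → ∞` and using `F(0) = 1` and continuity of `F` at `0` yields `F(1) = ∏_{j ≥ 1} (1 + qʲ)`.
-/

open Filter Finset Topology

lemma Nat.succ_mul_succ_succ_div_two (i : ℕ) :
    (i + 1) * (i + 2) / 2 = i * (i + 1) / 2 + (i + 1) := by
  rw [show (i + 1) * (i + 2) = i * (i + 1) + (i + 1) * 2 by ring, Nat.add_mul_div_right _ _ two_pos]

namespace Euler

variable {𝕜 : Type*} [NormedField 𝕜] {q x : 𝕜}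

def coeff (q : 𝕜) (i : ℕ) : 𝕜 :=
  q ^ (i * (i + 1) / 2) / ∏ j ∈ range i, (1 - q ^ (j + 1))

@[simp]
lemma coeff_zero (q : 𝕜) : coeff q 0 = 1 := by
  simp [coeff]

lemma coeff_succ (q : 𝕜) (i : ℕ) :
    coeff q (i + 1) = coeff q i * (q ^ (i + 1) / (1 - q ^ (i + 1))) := by
  rw [coeff, coeff, prod_range_succ, Nat.succ_mul_succ_succ_div_two, pow_add, div_mul_div_comm]

lemma one_sub_pow_succ_ne_zero (hq : ‖q‖ < 1) (i : ℕ) : 1 - q ^ (i + 1) ≠ 0 := by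
  refine sub_ne_zero.mpr fun h => ?_
  have : ‖q‖ ^ (i + 1) < 1 := pow_lt_one₀ (norm_nonneg q) hq i.succ_ne_zero
  rw [← norm_pow, ← h, norm_one] at this
  exact this.false

lemma coeff_succ_mul_one_sub_pow (hq : ‖q‖ < 1) (i : ℕ) :
    coeff q (i + 1) * (1 - q ^ (i + 1)) = coeff q i * q ^ (i + 1) := by
  rw [coeff_succ, mul_assoc, div_mul_cancel₀ _ (one_sub_pow_succ_ne_zero hq i)]

lemma summable_norm_coeff (hq : ‖q‖ < 1) : Summable fun i => ‖coeff q i‖ := by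
  have hpow : Tendsto (fun i : ℕ => q ^ (i + 1)) atTop (𝓝 0) :=
    (tendsto_pow_atTop_nhds_zero_of_norm_lt_one hq).comp (tendsto_add_atTop_nat 1)
  have hratio : Tendsto (fun i : ℕ => ‖q ^ (i + 1) / (1 - q ^ (i + 1))‖) atTop (𝓝 0) := by
    simpa using ((hpow.div (tendsto_const_nhds.sub hpow) (by simp)).norm)
  refine summable_of_ratio_norm_eventually_le one_half_lt_one ?_
  filter_upwards [hratio.eventually_le_const one_half_pos] with i hi
  rw [norm_norm, norm_norm, coeff_succ, norm_mul, mul_comm]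
  exact mul_le_mul_of_nonneg_right hi (norm_nonneg _)

lemma norm_coeff_mul_pow_le (hx : ‖x‖ ≤ 1) (i : ℕ) : ‖coeff q i * x ^ i‖ ≤ ‖coeff q i‖ := by
  rw [norm_mul, norm_pow]
  exact mul_le_of_le_one_right (norm_nonneg _) (pow_le_one₀ (norm_nonneg x) hx)

noncomputable def series (q x : 𝕜) : 𝕜 := ∑' i, coeff q i * x ^ i

@[simp]
lemma series_zero (q : 𝕜) : series q 0 = 1 := by
  rw [series, tsum_eq_single 0 fun i hi => by simp [hi]]
  simp

variable [CompleteSpace 𝕜]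

lemma summable_coeff_mul_pow (hq : ‖q‖ < 1) (hx : ‖x‖ ≤ 1) :
    Summable fun i => coeff q i * x ^ i :=
  (summable_norm_coeff hq).of_norm_bounded (norm_coeff_mul_pow_le hx)

lemma continuousAt_series_zero (hq : ‖q‖ < 1) : ContinuousAt (series q) 0 := by
  have hcont : ContinuousOn (series q) (Metric.closedBall 0 1) :=
    continuousOn_tsum (fun i => by fun_prop) (summable_norm_coeff hq)
      fun i x hx => norm_coeff_mul_pow_le (by simpa using hx) i
  exact hcont.continuousAt (Metric.closedBall_mem_nhds 0 one_pos)

lemma series_eq_one_add_mul_mul (hq : ‖q‖ < 1) (hx : ‖x‖ ≤ 1) :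
    series q x = (1 + q * x) * series q (q * x) := by
  have hqx : ‖q * x‖ ≤ 1 := by
    rw [norm_mul]; exact mul_le_one₀ hq.le (norm_nonneg x) hx
  have hs := summable_coeff_mul_pow hq hx
  have hs' := summable_coeff_mul_pow hq hqx
  have hterm (i : ℕ) : coeff q (i + 1) * x ^ (i + 1) - coeff q (i + 1) * (q * x) ^ (i + 1)
      = q * x * (coeff q i * (q * x) ^ i) := by
    linear_combination x ^ (i + 1) * coeff_succ_mul_one_sub_pow hq i
  calc series q x = series q (q * x) + ∑' i, (coeff q i * x ^ i - coeff q i * (q * x) ^ i) := by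
        rw [hs.tsum_sub hs', series, series]; ring
    _ = series q (q * x) + ∑' i, q * x * (coeff q i * (q * x) ^ i) := by
        rw [(hs.sub hs').tsum_eq_zero_add, tsum_congr hterm]; simp
    _ = (1 + q * x) * series q (q * x) := by
        rw [tsum_mul_left, series]; ring

lemma series_one_eq_prod_mul (hq : ‖q‖ < 1) (n : ℕ) :
    series q 1 = (∏ j ∈ range n, (1 + q ^ (j + 1))) * series q (q ^ n) := by
  induction n with
  | zero => simp
  | succ n ih =>
    have hqn : ‖q ^ n‖ ≤ 1 := by
      rw [norm_pow]; exact pow_le_one₀ (norm_nonneg q) hq.le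
    rw [ih, series_eq_one_add_mul_mul hq hqn, prod_range_succ, ← pow_succ']
    ring

lemma series_one (hq : ‖q‖ < 1) : series q 1 = ∏' i, (1 + q ^ (i + 1)) := by
  have hmult : Multipliable fun i : ℕ => 1 + q ^ (i + 1) :=
    multipliable_one_add_of_summable <| by
      simpa [norm_pow] using (summable_nat_add_iff 1).mpr
        (summable_geometric_of_lt_one (norm_nonneg q) hq)
  have hlim : Tendsto (fun n => (∏ j ∈ range n, (1 + q ^ (j + 1))) * series q (q ^ n)) atTop
      (𝓝 ((∏' i, (1 + q ^ (i + 1))) * series q 0)) :=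
    hmult.tendsto_prod_tprod_nat.mul
      ((continuousAt_series_zero hq).tendsto.comp (tendsto_pow_atTop_nhds_zero_of_norm_lt_one hq))
  simp_rw [← series_one_eq_prod_mul hq] at hlim
  simpa using tendsto_nhds_unique tendsto_const_nhds hlim

theorem tsum_coeff_succ (hq : ‖q‖ < 1) :
    ∑' i, coeff q (i + 1) = ∏' i, (1 + q ^ (i + 1)) - 1 := by
  have hs : Summable (coeff q) := by simpa using summable_coeff_mul_pow hq (x := 1) (by simp)
  rw [← series_one hq, series, eq_sub_iff_add_eq']
  simpa using (hs.tsum_eq_zero_add).symm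

end Euler

theorem euler_identity_general (ℓ : ℕ) (hℓ : ℓ.Prime) :
    ∑' i : ℕ,
      ((ℓ : ℝ))⁻¹ ^ ((i + 1) * (i + 2) / 2) /
        ∏ j ∈ Finset.range (i + 1), (1 - ((ℓ : ℝ))⁻¹ ^ (j + 1))
    = (∏' i : ℕ, (1 + ((ℓ : ℝ))⁻¹ ^ (i + 1))) - 1 := by
  have hq : ‖(ℓ : ℝ)⁻¹‖ < 1 := by
    rw [norm_inv, Real.norm_natCast]
    exact inv_lt_one_of_one_lt₀ (by exact_mod_cast hℓ.one_lt)
  exact Euler.tsum_coeff_succ hq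

/-- Euler's identity for `q = ℓ^{-1}` with `ℓ` an odd prime:
`Σ_{i=1}^∞ q^{i(i+1)/2} / ((1−q)⋯(1−q^i)) = ∏_{i=1}^∞ (1 + q^i) − 1`. -/
theorem euler_identity (ℓ : ℕ) (hℓ : ℓ.Prime) (hodd : Odd ℓ) :
    ∑' i : ℕ,
      ((ℓ : ℝ))⁻¹ ^ ((i + 1) * (i + 2) / 2) /
        ∏ j ∈ Finset.range (i + 1), (1 - ((ℓ : ℝ))⁻¹ ^ (j + 1))
    = (∏' i : ℕ, (1 + ((ℓ : ℝ))⁻¹ ^ (i + 1))) - 1 :=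
  euler_identity_general ℓ hℓ
end

section
/- Let ℓ ≥ 3 be a prime and for each i ≥ 1 set ρ_i = 1/(ℓ^{i(i+1)/2} · ∏_{j=1}^i (1−ℓ^{-j})). For a finite set S of nonnegative integers and i > max S with S ∪ {0} = {s₀ < s₁ < ⋯ < s_j}, s_{j+1} := i, set ρ^i_S = ∏_{k=0}^j ρ_{s_{k+1}−s_k}. Define τ₀ = 1, τ₁ = ρ^1_∅, and τ_i = Σ_{S ⊆ {1,…,i−1}} ρ^i_S for i > 1. Then Σ_{i=0}^∞ τ_i converges. -/
/-- `ρ_i = 1/(ℓ^{i(i+1)/2} ∏_{j=1}^i (1 − ℓ^{-j}))`. -/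
noncomputable def rhoTerm (ℓ : ℕ) (i : ℕ) : ℝ :=
  1 / ((ℓ : ℝ) ^ (i * (i + 1) / 2) * ∏ j ∈ Finset.range i, (1 - ((ℓ : ℝ))⁻¹ ^ (j + 1)))

/-- For a finite set `S` of nonnegative integers and `i > max S`, the list of
consecutive gaps of `S ∪ {0}` together with the final gap up to `i`:
if `S ∪ {0} = {s₀ < s₁ < ⋯ < s_j}` and `s_{j+1} := i`, this is
`[s₁ − s₀, …, s_{j+1} − s_j]`. -/
def gapList (S : Finset ℕ) (i : ℕ) : List ℕ :=
  let l := (insert 0 S).sort (· ≤ ·) ++ [i]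
  List.zipWith (fun a b => b - a) l l.tail

/-- `ρ^i_S = ∏_{k=0}^j ρ_{s_{k+1} − s_k}`. -/
noncomputable def rhoSet (ℓ : ℕ) (S : Finset ℕ) (i : ℕ) : ℝ :=
  ((gapList S i).map (rhoTerm ℓ)).prod

/-- `τ₀ = 1` and `τ_i = Σ_{S ⊆ {1,…,i−1}} ρ^i_S` for `i ≥ 1`. -/
noncomputable def tauTerm (ℓ : ℕ) (i : ℕ) : ℝ :=
  if i = 0 then 1 else ∑ S ∈ (Finset.Ioo 0 i).powerset, rhoSet ℓ S i

section Aux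

variable {ℓ : ℕ}

lemma aux_one_sub_sum_le_prod (f : ℕ → ℝ) (h0 : ∀ j, 0 ≤ f j) (h1 : ∀ j, f j ≤ 1) (m : ℕ) :
    1 - ∑ j ∈ Finset.range m, f j ≤ ∏ j ∈ Finset.range m, (1 - f j) := by
  induction m with
  | zero => simp
  | succ n ih =>
    rw [Finset.prod_range_succ, Finset.sum_range_succ]
    have hp : (0:ℝ) ≤ ∏ j ∈ Finset.range n, (1 - f j) :=
      Finset.prod_nonneg fun j _ => by linarith [h1 j]
    have hS : (0:ℝ) ≤ ∑ j ∈ Finset.range n, f j :=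
      Finset.sum_nonneg fun j _ => h0 j
    nlinarith [h0 n, h1 n]

lemma aux_geom13 (m : ℕ) : ∑ j ∈ Finset.range m, ((1:ℝ)/3) ^ (j+1) = 1/2 - (1/2) * (1/3)^m := by
  induction m with
  | zero => simp
  | succ n ih =>
    rw [Finset.sum_range_succ, ih]
    ring

lemma aux_inv_le (h3 : 3 ≤ ℓ) : ((ℓ:ℝ))⁻¹ ≤ 1/3 := by
  have hl : (3:ℝ) ≤ (ℓ:ℝ) := by exact_mod_cast h3
  rw [one_div]
  exact inv_anti₀ (by norm_num) hl

lemma prod_ge_half (h3 : 3 ≤ ℓ) (m : ℕ) :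
    (1:ℝ)/2 ≤ ∏ j ∈ Finset.range m, (1 - ((ℓ:ℝ))⁻¹ ^ (j + 1)) := by
  have hx0 : (0:ℝ) ≤ (ℓ:ℝ)⁻¹ := by positivity
  have hx : ((ℓ:ℝ))⁻¹ ≤ 1/3 := aux_inv_le h3
  have h0 : ∀ j : ℕ, 0 ≤ ((ℓ:ℝ))⁻¹ ^ (j+1) := fun j => by positivity
  have h1 : ∀ j : ℕ, ((ℓ:ℝ))⁻¹ ^ (j+1) ≤ 1 := fun j =>
    pow_le_one₀ hx0 (hx.trans (by norm_num))
  have hsum : ∑ j ∈ Finset.range m, ((ℓ:ℝ))⁻¹ ^ (j+1) ≤ 1/2 := by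
    have hle : ∑ j ∈ Finset.range m, ((ℓ:ℝ))⁻¹ ^ (j+1)
        ≤ ∑ j ∈ Finset.range m, ((1:ℝ)/3) ^ (j+1) := by
      apply Finset.sum_le_sum
      intro j _
      exact pow_le_pow_left₀ hx0 hx (j+1)
    have h13 : (0:ℝ) ≤ (1/3:ℝ)^m := by positivity
    rw [aux_geom13 m] at hle
    linarith
  have := aux_one_sub_sum_le_prod (fun j => ((ℓ:ℝ))⁻¹ ^ (j+1)) h0 h1 m
  linarith

lemma rho_pos (h3 : 3 ≤ ℓ) (m : ℕ) : 0 < rhoTerm ℓ m := by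
  have hl : (3:ℝ) ≤ (ℓ:ℝ) := by exact_mod_cast h3
  have hA : (0:ℝ) < (ℓ:ℝ) ^ (m * (m+1) / 2) := by positivity
  have hB := prod_ge_half h3 m
  exact div_pos one_pos (mul_pos hA (lt_of_lt_of_le (by norm_num) hB))

lemma rho_le (h3 : 3 ≤ ℓ) (m : ℕ) :
    rhoTerm ℓ m ≤ 2 * (ℓ:ℝ) * (((ℓ:ℝ))⁻¹) ^ (2*m) := by
  have hl : (3:ℝ) ≤ (ℓ:ℝ) := by exact_mod_cast h3
  have hl0 : (0:ℝ) < (ℓ:ℝ) := by linarith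
  set T := m * (m+1) / 2 with hT
  have hA : (0:ℝ) < (ℓ:ℝ) ^ T := by positivity
  have hB := prod_ge_half h3 m
  have hTn : 2 * m ≤ T + 1 := by
    have h2 : m * (m+1) = 2 * T := (Nat.two_mul_div_two_of_even (Nat.even_mul_succ_self m)).symm
    have h4 : 4 * m ≤ m * (m+1) + 2 := by
      rcases m with _ | _ | k
      · omega
      · omega
      · nlinarith
    rw [h2] at h4
    omega
  have key : (ℓ:ℝ) ^ (2*m) ≤ (ℓ:ℝ) ^ (T+1) :=
    pow_le_pow_right₀ (by linarith) hTn
  have h1 : rhoTerm ℓ m ≤ 2 / (ℓ:ℝ) ^ T := by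
    rw [rhoTerm, div_le_div_iff₀ (by positivity) hA]
    nlinarith
  refine h1.trans ?_
  rw [inv_pow, div_le_iff₀ hA]
  have h2m : (0:ℝ) < (ℓ:ℝ)^(2*m) := by positivity
  calc (2:ℝ) = 2*(ℓ:ℝ)^(2*m) * ((ℓ:ℝ)^(2*m))⁻¹ := by field_simp
    _ ≤ 2*(ℓ:ℝ)^(T+1) * ((ℓ:ℝ)^(2*m))⁻¹ := by
        apply mul_le_mul_of_nonneg_right (by linarith) (by positivity)
    _ = 2*(ℓ:ℝ)*((ℓ:ℝ)^(2*m))⁻¹*(ℓ:ℝ)^T := by rw [pow_succ]; ring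

lemma listprod_nonneg (h3 : 3 ≤ ℓ) (L : List ℕ) : 0 ≤ (L.map (rhoTerm ℓ)).prod := by
  induction L with
  | nil => simp
  | cons g t ih =>
    simp only [List.map_cons, List.prod_cons]
    exact mul_nonneg (rho_pos h3 g).le ih

lemma listprod_le (h3 : 3 ≤ ℓ) (L : List ℕ) :
    (L.map (rhoTerm ℓ)).prod ≤ (2*(ℓ:ℝ))^L.length * (((ℓ:ℝ))⁻¹)^(2*L.sum) := by
  induction L with
  | nil => simp
  | cons g t ih =>
    simp only [List.map_cons, List.prod_cons, List.length_cons, List.sum_cons]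
    have hl0 : (0:ℝ) < (ℓ:ℝ) := by
      have : (3:ℝ) ≤ (ℓ:ℝ) := by exact_mod_cast h3
      linarith
    have hrw : (2*(ℓ:ℝ))^(t.length+1) * (((ℓ:ℝ))⁻¹)^(2*(g + t.sum))
        = (2*(ℓ:ℝ)*(((ℓ:ℝ))⁻¹)^(2*g)) * ((2*(ℓ:ℝ))^t.length * (((ℓ:ℝ))⁻¹)^(2*t.sum)) := by
      rw [pow_succ, Nat.mul_add, pow_add]
      ring
    rw [hrw]
    exact mul_le_mul (rho_le h3 g) ih (listprod_nonneg h3 t) (by positivity)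

lemma gap_sum (t : List ℕ) : ∀ a i : ℕ,
    i ≤ a + (List.zipWith (fun x y => y - x) (a :: (t ++ [i])) (t ++ [i])).sum := by
  induction t with
  | nil => intro a i; simp; omega
  | cons b t ih =>
    intro a i
    simp only [List.cons_append, List.zipWith_cons_cons, List.sum_cons]
    have := ih b i
    omega

lemma gapList_sum (S : Finset ℕ) (i : ℕ) (hS : 0 ∉ S) : i ≤ (gapList S i).sum := by
  unfold gapList
  rw [Finset.sort_insert (· ≤ ·) (fun b _ => Nat.zero_le b) hS]
  simpa using gap_sum (S.sort (· ≤ ·)) 0 i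

lemma gapList_length (S : Finset ℕ) (i : ℕ) (hS : 0 ∉ S) :
    (gapList S i).length = S.card + 1 := by
  unfold gapList
  rw [Finset.sort_insert (· ≤ ·) (fun b _ => Nat.zero_le b) hS]
  simp [List.length_zipWith]

lemma rhoSet_le (h3 : 3 ≤ ℓ) (S : Finset ℕ) (i : ℕ) (hS : 0 ∉ S) :
    rhoSet ℓ S i ≤ (2*(ℓ:ℝ))^(S.card + 1) * ((((ℓ:ℝ))⁻¹)^2)^i := by
  have h1 := listprod_le h3 (gapList S i)
  rw [gapList_length S i hS] at h1
  refine h1.trans ?_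
  rw [← pow_mul]
  have hx0 : (0:ℝ) ≤ ((ℓ:ℝ))⁻¹ := by positivity
  have hx1 : ((ℓ:ℝ))⁻¹ ≤ 1 := (aux_inv_le h3).trans (by norm_num)
  apply mul_le_mul_of_nonneg_left _ (by positivity)
  exact pow_le_pow_of_le_one hx0 hx1 (by
    have := gapList_sum S i hS; omega)

end Aux

/-- For a prime `ℓ ≥ 3`, the series `Σ_{i=0}^∞ τ_i` converges. -/
theorem tau_summable (ℓ : ℕ) (hℓ : ℓ.Prime) (h3 : 3 ≤ ℓ) :
    Summable (tauTerm ℓ) := by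
  have hl : (3:ℝ) ≤ (ℓ:ℝ) := by exact_mod_cast h3
  have hl0 : (0:ℝ) < (ℓ:ℝ) := by linarith
  set r : ℝ := (1 + 2*(ℓ:ℝ)) * (((ℓ:ℝ))⁻¹)^2 with hr
  have hr0 : 0 ≤ r := by positivity
  have hr1 : r < 1 := by
    have h1 : 1 + 2*(ℓ:ℝ) < (ℓ:ℝ)^2 := by nlinarith
    have h2 : r = (1 + 2*(ℓ:ℝ)) / (ℓ:ℝ)^2 := by
      rw [hr, inv_pow, div_eq_mul_inv]
    rw [h2, div_lt_one (by positivity)]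
    exact h1
  have htau_le : ∀ i, tauTerm ℓ i ≤ 2*(ℓ:ℝ) * r^i := by
    intro i
    rcases Nat.eq_zero_or_pos i with hi | hi
    · subst hi
      simp [tauTerm]
      linarith
    · rw [tauTerm, if_neg hi.ne']
      have hb : ∀ S ∈ (Finset.Ioo 0 i).powerset,
          rhoSet ℓ S i ≤ (2*(ℓ:ℝ))^(S.card + 1) * ((((ℓ:ℝ))⁻¹)^2)^i := by
        intro S hSmem
        apply rhoSet_le h3 S i
        intro h0
        have := Finset.mem_powerset.mp hSmem h0
        simp at this
      calc ∑ S ∈ (Finset.Ioo 0 i).powerset, rhoSet ℓ S i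
          ≤ ∑ S ∈ (Finset.Ioo 0 i).powerset, (2*(ℓ:ℝ))^(S.card + 1) * ((((ℓ:ℝ))⁻¹)^2)^i :=
            Finset.sum_le_sum hb
        _ = (2*(ℓ:ℝ)) * (∑ S ∈ (Finset.Ioo 0 i).powerset, (2*(ℓ:ℝ))^S.card) * ((((ℓ:ℝ))⁻¹)^2)^i := by
            simp only [Finset.sum_mul, Finset.mul_sum]
            apply Finset.sum_congr rfl
            intro S _
            rw [pow_succ]
            ring
        _ = (2*(ℓ:ℝ)) * (2*(ℓ:ℝ) + 1)^(i-1) * ((((ℓ:ℝ))⁻¹)^2)^i := by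
            congr 2
            have := Finset.prod_add (fun _ : ℕ => 2*(ℓ:ℝ)) (fun _ : ℕ => (1:ℝ)) (Finset.Ioo 0 i)
            simp only [Finset.prod_const, one_pow, mul_one] at this
            rw [← this, Nat.card_Ioo]
            norm_num
        _ ≤ (2*(ℓ:ℝ)) * (1 + 2*(ℓ:ℝ))^i * ((((ℓ:ℝ))⁻¹)^2)^i := by
            have h1 : (2*(ℓ:ℝ) + 1)^(i-1) ≤ (1 + 2*(ℓ:ℝ))^i := by
              rw [add_comm (2*(ℓ:ℝ)) 1]
              exact pow_le_pow_right₀ (by linarith) (by omega)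
            apply mul_le_mul_of_nonneg_right _ (by positivity)
            exact mul_le_mul_of_nonneg_left h1 (by linarith)
        _ = 2*(ℓ:ℝ) * r^i := by rw [hr, mul_pow]; ring
  have htau0 : ∀ i, 0 ≤ tauTerm ℓ i := by
    intro i
    rcases Nat.eq_zero_or_pos i with hi | hi
    · subst hi; simp [tauTerm]
    · rw [tauTerm, if_neg hi.ne']
      exact Finset.sum_nonneg fun S _ => listprod_nonneg h3 _
  have hsum : Summable (fun i : ℕ => 2*(ℓ:ℝ) * r^i) :=
    (summable_geometric_of_lt_one hr0 hr1).mul_left _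
  exact Summable.of_nonneg_of_le htau0 htau_le hsum
end

section
/- Let ℓ be a prime and A a finite abelian ℓ-group of ℓ-rank r and ℓ²-rank s, and let A_{⊕i} = A ⊕ (Z/ℓ)^i. Then |Aut(A_{⊕i})| = ℓ^{2ir+i²} · ((ℓ^{-1})_{r−s+i} / (ℓ^{-1})_{r−s}) · |Aut(A)|, where (ℓ^{-1})_m = ∏_{j=1}^m (1 − ℓ^{-j}). -/
/-- `(ℓ^{-1})_m = ∏_{j=1}^m (1 − ℓ^{-j})`. -/
noncomputable def lPoch (ℓ : ℕ) (m : ℕ) : ℝ := ∏ j ∈ Finset.range m, (1 - ((ℓ : ℝ))⁻¹ ^ (j + 1))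

/-!
Let `G` be a finite abelian group with `|G[ℓ]| = ℓ^R` and `|(ℓG)[ℓ]| = ℓ^S`, and let `Aut(G × ℤ/ℓ)`
act on `G × ℤ/ℓ`. The orbit of `(0, 1)` is the set of elements killed by `ℓ` that are not
multiples of `ℓ`, of size `ℓ^(R+1) - ℓ^S`; the stabilizer consists of the shears
`(h, e) ↦ (a h, e + γ h)` with `a ∈ Aut G` and `γ ∈ Hom(G, ℤ/ℓ)`, and `Hom(G, ℤ/ℓ)` is the dual of
the `𝔽_ℓ`-vector space `G/ℓG`, of size `|G[ℓ]| = ℓ^R`. Hence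
`|Aut(G × ℤ/ℓ)| = ℓ^(2R+1) (1 - ℓ^-(R-S+1)) |Aut G|`. Adjoining the `i` copies of `ℤ/ℓ` one at a
time raises `R` by one each time and leaves `S` unchanged, and the factors telescope.
-/

open AddAction

def AddAut.shear {G H : Type*} [AddCommGroup G] [AddCommGroup H] (a : AddAut G) (γ : G →+ H) :
    AddAut (G × H) :=
  (LinearEquiv.skewProd a.toIntLinearEquiv (LinearEquiv.refl ℤ H) γ.toIntLinearMap).toAddEquiv

@[simp]
lemma AddAut.shear_apply {G H : Type*} [AddCommGroup G] [AddCommGroup H] (a : AddAut G)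
    (γ : G →+ H) (x : G × H) : AddAut.shear a γ x = (a x.1, x.2 + γ x.1) :=
  rfl

lemma AddMonoidHom.card_ker_eq_card_quotient_range {G : Type*} [AddCommGroup G] [Finite G]
    (f : G →+ G) : Nat.card f.ker = Nat.card (G ⧸ f.range) := by
  have hG₁ := f.ker.card_mul_index
  have hG₂ := f.range.card_mul_index
  rw [AddSubgroup.index_ker, mul_comm] at hG₁
  exact Nat.eq_of_mul_eq_mul_left Nat.card_pos (hG₁.trans hG₂.symm)

section ProdZMod

variable {ℓ : ℕ} {G : Type*} [AddCommGroup G]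

lemma card_nsmul_eq_zero_prod_zmod [NeZero ℓ] :
    Nat.card {y : G × ZMod ℓ // ℓ • y = 0} = Nat.card {a : G // ℓ • a = 0} * ℓ := by
  calc Nat.card {y : G × ZMod ℓ // ℓ • y = 0}
      = Nat.card ({a : G // ℓ • a = 0} × ZMod ℓ) :=
        Nat.card_congr <| (Equiv.subtypeEquivRight (q := fun y ↦ ℓ • y.1 = 0) fun y ↦ by
          simp [Prod.ext_iff, nsmul_eq_mul]).trans
          (Equiv.prodSubtypeFstEquivSubtypeProd (β := ZMod ℓ) (p := fun a : G ↦ ℓ • a = 0))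
    _ = Nat.card {a : G // ℓ • a = 0} * ℓ := by rw [Nat.card_prod, Nat.card_zmod]

lemma card_divisible_nsmul_eq_zero_prod_zmod :
    Nat.card {y : G × ZMod ℓ // (∃ b, y = ℓ • b) ∧ ℓ • y = 0}
      = Nat.card {a : G // (∃ b, a = ℓ • b) ∧ ℓ • a = 0} := by
  calc Nat.card {y : G × ZMod ℓ // (∃ b, y = ℓ • b) ∧ ℓ • y = 0}
      = Nat.card ({a : G // (∃ b, a = ℓ • b) ∧ ℓ • a = 0} × {c : ZMod ℓ // c = 0}) :=
        Nat.card_congr <| (Equiv.subtypeEquivRight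
          (q := fun y ↦ ((∃ b, y.1 = ℓ • b) ∧ ℓ • y.1 = 0) ∧ y.2 = 0) fun y ↦ by
            simp [Prod.ext_iff, nsmul_eq_mul, and_right_comm]).trans
          (Equiv.subtypeProdEquivProd (p := fun a : G ↦ (∃ b, a = ℓ • b) ∧ ℓ • a = 0)
            (q := fun c : ZMod ℓ ↦ c = 0))
    _ = Nat.card {a : G // (∃ b, a = ℓ • b) ∧ ℓ • a = 0} := by
        rw [Nat.card_prod, Nat.card_unique (α := {c : ZMod ℓ // c = 0}), mul_one]

lemma card_divisible_nsmul_eq_zero_le [Finite G] :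
    Nat.card {a : G // (∃ b, a = ℓ • b) ∧ ℓ • a = 0} ≤ Nat.card {a : G // ℓ • a = 0} :=
  Nat.card_mono (Set.toFinite _) fun _ h ↦ h.2

lemma exists_addAut_prod_zmod_apply_zero_one [NeZero ℓ] [Finite G] {g : G} {c : ZMod ℓ}
    (hg : ℓ • g = 0) (χ : G →+ ZMod ℓ) (hχ : IsUnit (c + χ g)) :
    ∃ φ : AddAut (G × ZMod ℓ), φ (0, 1) = (g, c) := by
  let κ : ZMod ℓ →+ G := ZMod.lift ℓ ⟨zmultiplesHom G g, by simpa using hg⟩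
  have hκ : κ 1 = g := by simpa using ZMod.lift_coe ℓ ⟨zmultiplesHom G g, by simpa using hg⟩ 1
  have hχκ (e : ZMod ℓ) : χ (κ e) = e * χ g := by
    obtain ⟨n, rfl⟩ := ZMod.intCast_surjective e
    simp [κ, zsmul_eq_mul]
  -- a kernel element `(-κ e, e)` of `ψ` satisfies `(c + χ g) * e = 0`
  let ψ : G × ZMod ℓ →+ G × ZMod ℓ :=
    { toFun x := (x.1 + κ x.2, c * x.2 - χ x.1)
      map_zero' := by simp
      map_add' x y := by
        simp only [Prod.fst_add, Prod.snd_add, map_add, Prod.mk_add_mk, Prod.mk.injEq]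
        constructor
        · abel
        · ring }
  have hψ : Function.Injective ψ := by
    rw [injective_iff_map_eq_zero]
    rintro ⟨h, e⟩ hx
    simp only [ψ, AddMonoidHom.coe_mk, ZeroHom.coe_mk, Prod.mk_eq_zero] at hx
    obtain ⟨hh, he⟩ := hx
    rw [← neg_eq_of_add_eq_zero_left hh, map_neg, hχκ] at he
    have he0 : e = 0 := (hχ.mul_right_eq_zero).mp (by linear_combination he)
    simp_all
  refine ⟨AddEquiv.ofBijective ψ (Finite.injective_iff_bijective.mp hψ), ?_⟩
  show ψ (0, 1) = (g, c)
  simp [ψ, hκ]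

lemma AddAut.apply_zero_zmod_of_apply_zero_one {φ : AddAut (G × ZMod ℓ)}
    (hφ : φ (0, 1) = (0, 1)) (e : ZMod ℓ) : φ (0, e) = (0, e) := by
  obtain ⟨n, rfl⟩ := ZMod.intCast_surjective e
  have h : ((0 : G), (n : ZMod ℓ)) = n • ((0 : G), (1 : ZMod ℓ)) := by simp
  rw [h, map_zsmul, hφ]

lemma exists_shear_eq_of_apply_zero_one [Finite G] {φ : AddAut (G × ZMod ℓ)}
    (hφ : φ (0, 1) = (0, 1)) : ∃ (a : AddAut G) (γ : G →+ ZMod ℓ), AddAut.shear a γ = φ := by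
  let φ₁ : G →+ G × ZMod ℓ := φ.toAddMonoidHom.comp (AddMonoidHom.inl G (ZMod ℓ))
  have hφ₁ : Function.Injective ((AddMonoidHom.fst G (ZMod ℓ)).comp φ₁) := by
    rw [injective_iff_map_eq_zero]
    intro h hh
    have : φ (h, 0) = φ (0, (φ (h, 0)).2) := by
      rw [AddAut.apply_zero_zmod_of_apply_zero_one hφ]
      exact Prod.ext hh rfl
    simpa using congrArg Prod.fst (φ.injective this)
  refine ⟨AddEquiv.ofBijective _ (Finite.injective_iff_bijective.mp hφ₁),
    (AddMonoidHom.snd G (ZMod ℓ)).comp φ₁, ?_⟩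
  ext ⟨h, e⟩ <;>
  · have : φ (h, e) = φ (h, 0) + φ (0, e) := by rw [← map_add]; simp
    simp [this, AddAut.apply_zero_zmod_of_apply_zero_one hφ, φ₁, add_comm]

lemma card_stabilizer_zero_one [Finite G] :
    Nat.card (stabilizer (AddAut (G × ZMod ℓ)) ((0, 1) : G × ZMod ℓ))
      = Nat.card (AddAut G) * Nat.card (G →+ ZMod ℓ) := by
  let shear (p : AddAut G × (G →+ ZMod ℓ)) :
      stabilizer (AddAut (G × ZMod ℓ)) ((0, 1) : G × ZMod ℓ) :=
    ⟨AddAut.shear p.1 p.2, by simp [mem_stabilizer_iff, AddAut.vadd_def]⟩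
  have hinj : Function.Injective shear := by
    rintro ⟨a, γ⟩ ⟨a', γ'⟩ h
    have h' (x : G) := DFunLike.congr_fun (congrArg Subtype.val h) (x, 0)
    simp only [shear, AddAut.shear_apply, Prod.mk.injEq, zero_add] at h'
    exact Prod.ext (AddEquiv.ext fun x ↦ (h' x).1) (AddMonoidHom.ext fun x ↦ (h' x).2)
  have hsurj : Function.Surjective shear := by
    rintro ⟨φ, hφ⟩
    obtain ⟨a, γ, rfl⟩ := exists_shear_eq_of_apply_zero_one (mem_stabilizer_iff.mp hφ)
    exact ⟨(a, γ), rfl⟩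
  rw [← Nat.card_congr (Equiv.ofBijective shear ⟨hinj, hsurj⟩), Nat.card_prod]

instance : Module (ZMod ℓ) (G ⧸ (nsmulAddMonoidHom ℓ : G →+ G).range) :=
  QuotientAddGroup.zmodModule fun x ↦ ⟨x, rfl⟩

def addMonoidHomZModEquivQuotient :
    (G →+ ZMod ℓ) ≃ (G ⧸ (nsmulAddMonoidHom ℓ : G →+ G).range →+ ZMod ℓ) where
  toFun χ := QuotientAddGroup.lift _ χ (by
    rintro _ ⟨x, rfl⟩
    simp [nsmul_eq_mul])
  invFun χ := χ.comp (QuotientAddGroup.mk' _)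
  left_inv _ := rfl
  right_inv _ := by ext; rfl

variable [Fact ℓ.Prime]

lemma exists_addMonoidHom_zmod_apply_ne_zero {g : G} (hg : ¬ ∃ b, g = ℓ • b) :
    ∃ χ : G →+ ZMod ℓ, χ g ≠ 0 := by
  have hq : (g : G ⧸ (nsmulAddMonoidHom ℓ : G →+ G).range) ≠ 0 := by
    rw [Ne, QuotientAddGroup.eq_zero_iff]
    rintro ⟨b, hb⟩
    exact hg ⟨b, hb.symm⟩
  obtain ⟨φ, hφ⟩ := not_forall.mp <| mt (Module.forall_dual_apply_eq_zero_iff (ZMod ℓ) _).mp hq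
  exact ⟨addMonoidHomZModEquivQuotient.symm φ.toAddMonoidHom, hφ⟩

lemma card_addMonoidHom_zmod [Finite G] :
    Nat.card (G →+ ZMod ℓ) = Nat.card {a : G // ℓ • a = 0} := by
  let Q := G ⧸ (nsmulAddMonoidHom ℓ : G →+ G).range
  have : Module.Finite (ZMod ℓ) Q := Module.Finite.of_finite
  calc Nat.card (G →+ ZMod ℓ)
      = Nat.card (Module.Dual (ZMod ℓ) Q) := Nat.card_congr <|
        addMonoidHomZModEquivQuotient.trans (AddMonoidHom.toZModLinearMapEquiv ℓ).toEquiv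
    _ = Nat.card Q := by
        classical
        exact Nat.card_congr (Module.finBasis (ZMod ℓ) Q).toDualEquiv.toEquiv.symm
    _ = Nat.card (nsmulAddMonoidHom ℓ : G →+ G).ker :=
        (AddMonoidHom.card_ker_eq_card_quotient_range (nsmulAddMonoidHom ℓ : G →+ G)).symm
    _ = Nat.card {a : G // ℓ • a = 0} :=
        Nat.card_congr (Equiv.subtypeEquivRight fun _ ↦ AddMonoidHom.mem_ker)

lemma mem_orbit_zero_one_iff [Finite G] {y : G × ZMod ℓ} :
    y ∈ orbit (AddAut (G × ZMod ℓ)) ((0, 1) : G × ZMod ℓ) ↔ ℓ • y = 0 ∧ ¬ ∃ b, y = ℓ • b := by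
  constructor
  · rintro ⟨φ, rfl⟩
    refine ⟨by simp [AddAut.vadd_def, ← map_nsmul], ?_⟩
    rintro ⟨b, hb⟩
    have h := congrArg (fun x ↦ (φ.symm x).2) hb
    simp [AddAut.vadd_def, nsmul_eq_mul] at h
  · rintro ⟨hy, hdiv⟩
    obtain ⟨g, c⟩ := y
    have hg : ℓ • g = 0 := congrArg Prod.fst hy
    obtain ⟨χ, hχ⟩ : ∃ χ : G →+ ZMod ℓ, c + χ g ≠ 0 := by
      by_cases hc : c = 0
      · subst hc
        have hgdiv : ¬ ∃ b, g = ℓ • b := by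
          rintro ⟨b, rfl⟩
          exact hdiv ⟨(b, 0), by simp⟩
        obtain ⟨χ, hχ⟩ := exists_addMonoidHom_zmod_apply_ne_zero hgdiv
        exact ⟨χ, by simpa using hχ⟩
      · exact ⟨0, by simpa using hc⟩
    exact exists_addAut_prod_zmod_apply_zero_one hg χ (Ne.isUnit hχ)

lemma card_orbit_zero_one [Finite G] :
    Nat.card (orbit (AddAut (G × ZMod ℓ)) ((0, 1) : G × ZMod ℓ))
      = Nat.card {a : G // ℓ • a = 0} * ℓ - Nat.card {a : G // (∃ b, a = ℓ • b) ∧ ℓ • a = 0} := by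
  let torsion : Set (G × ZMod ℓ) := {y | ℓ • y = 0}
  let divisible : Set (G × ZMod ℓ) := {y | ∃ b, y = ℓ • b}
  have horbit : orbit (AddAut (G × ZMod ℓ)) ((0, 1) : G × ZMod ℓ) = torsion \ divisible := by
    ext y
    exact mem_orbit_zero_one_iff
  have hsplit := Set.ncard_inter_add_ncard_sdiff_eq_ncard torsion divisible
  have htorsion : Nat.card {y : G × ZMod ℓ // ℓ • y = 0} = torsion.ncard := Nat.card_coe_set_eq _
  have hdivisible : Nat.card {y : G × ZMod ℓ // (∃ b, y = ℓ • b) ∧ ℓ • y = 0}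
      = (torsion ∩ divisible).ncard := by
    rw [Set.inter_comm]
    exact Nat.card_coe_set_eq _
  rw [← card_nsmul_eq_zero_prod_zmod, ← card_divisible_nsmul_eq_zero_prod_zmod, horbit,
    Nat.card_coe_set_eq, htorsion, hdivisible]
  omega

theorem card_addAut_prod_zmod [Finite G] :
    Nat.card (AddAut (G × ZMod ℓ))
      = (Nat.card {a : G // ℓ • a = 0} * ℓ - Nat.card {a : G // (∃ b, a = ℓ • b) ∧ ℓ • a = 0})
        * (Nat.card (AddAut G) * Nat.card {a : G // ℓ • a = 0}) := by
  rw [← card_orbit_zero_one, ← card_addMonoidHom_zmod, ← card_stabilizer_zero_one,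
    ← Nat.card_prod]
  exact Nat.card_congr (orbitProdStabilizerEquivAddGroup _ _).symm

end ProdZMod

lemma lPoch_succ (ℓ m : ℕ) : lPoch ℓ (m + 1) = lPoch ℓ m * (1 - (ℓ : ℝ)⁻¹ ^ (m + 1)) :=
  Finset.prod_range_succ _ _

lemma lPoch_pos {ℓ : ℕ} (hℓ : 1 < ℓ) (m : ℕ) : 0 < lPoch ℓ m := by
  refine Finset.prod_pos fun j _ ↦ sub_pos.mpr (pow_lt_one₀ (by positivity) ?_ (by omega))
  exact inv_lt_one_of_one_lt₀ (by exact_mod_cast hℓ)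

section RankCount

variable {ℓ : ℕ} [Fact ℓ.Prime] {G : Type*} [AddCommGroup G] [Finite G] {R S : ℕ}

lemma le_of_card_nsmul_eq_zero_eq_pow (hR : Nat.card {a : G // ℓ • a = 0} = ℓ ^ R)
    (hS : Nat.card {a : G // (∃ b, a = ℓ • b) ∧ ℓ • a = 0} = ℓ ^ S) : S ≤ R :=
  (Nat.pow_le_pow_iff_right (Fact.out : ℓ.Prime).one_lt).mp
    (hR ▸ hS ▸ card_divisible_nsmul_eq_zero_le)

lemma card_addAut_prod_zmod_of_card_eq_pow (hR : Nat.card {a : G // ℓ • a = 0} = ℓ ^ R)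
    (hS : Nat.card {a : G // (∃ b, a = ℓ • b) ∧ ℓ • a = 0} = ℓ ^ S) :
    (Nat.card (AddAut (G × ZMod ℓ)) : ℝ)
      = ℓ ^ (2 * R + 1) * (lPoch ℓ (R - S + 1) / lPoch ℓ (R - S)) * Nat.card (AddAut G) := by
  obtain ⟨d, rfl⟩ := Nat.exists_eq_add_of_le (le_of_card_nsmul_eq_zero_eq_pow hR hS)
  have hℓ : (ℓ : ℝ) ≠ 0 := by exact_mod_cast (Fact.out : ℓ.Prime).ne_zero
  have hle : ℓ ^ S ≤ ℓ ^ (S + d) * ℓ :=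
    (Nat.pow_le_pow_right (Fact.out : ℓ.Prime).pos (by omega)).trans_eq (pow_succ _ _)
  rw [card_addAut_prod_zmod, hR, hS, Nat.cast_mul, Nat.cast_sub hle, Nat.add_sub_cancel_left,
    lPoch_succ, mul_div_cancel_left₀ _ (lPoch_pos (Fact.out : ℓ.Prime).one_lt d).ne']
  push_cast
  rw [inv_pow]
  field_simp
  ring

end RankCount

theorem card_aut_add_elementary_general (ℓ : ℕ) (hℓ : ℓ.Prime)
    (A : Type*) [AddCommGroup A] [Finite A]
    (r s : ℕ)
    (hr : Nat.card {a : A // ℓ • a = 0} = ℓ ^ r)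
    (hs : Nat.card {a : A // (∃ b : A, a = ℓ • b) ∧ ℓ • a = 0} = ℓ ^ s)
    (i : ℕ) :
    (Nat.card (AddAut (A × (Fin i → ZMod ℓ))) : ℝ)
      = (ℓ : ℝ) ^ (2 * i * r + i ^ 2) * (lPoch ℓ (r - s + i) / lPoch ℓ (r - s)) *
        (Nat.card (AddAut A) : ℝ) := by
  have : Fact ℓ.Prime := ⟨hℓ⟩
  have hP := lPoch_pos hℓ.one_lt
  induction i generalizing A r with
  | zero =>
    rw [Nat.card_congr (AddAut.congr (AddEquiv.prodUnique : A × (Fin 0 → ZMod ℓ) ≃+ A)).toEquiv]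
    simp [(hP (r - s)).ne']
  | succ i ih =>
    let e : A × (Fin (i + 1) → ZMod ℓ) ≃+ (A × ZMod ℓ) × (Fin i → ZMod ℓ) :=
      ((AddEquiv.refl A).prodCongr (Fin.consLinearEquiv ℕ fun _ ↦ ZMod ℓ).toAddEquiv.symm).trans
        AddEquiv.prodAssoc.symm
    rw [Nat.card_congr (AddAut.congr e).toEquiv,
      ih (A × ZMod ℓ) (r + 1) (by rw [card_nsmul_eq_zero_prod_zmod, hr, pow_succ])
        (by rw [card_divisible_nsmul_eq_zero_prod_zmod, hs]),
      card_addAut_prod_zmod_of_card_eq_pow hr hs,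
      Nat.sub_add_comm (le_of_card_nsmul_eq_zero_eq_pow hr hs),
      show r - s + 1 + i = r - s + (i + 1) by omega]
    field_simp [(hP (r - s)).ne', (hP (r - s + 1)).ne']
    ring

/-- For a finite abelian `ℓ`-group `A` of `ℓ`-rank `r` and `ℓ²`-rank `s`, and
`A_{⊕i} = A ⊕ (Z/ℓ)^i`,
`|Aut(A_{⊕i})| = ℓ^{2ir+i²} ((ℓ^{-1})_{r−s+i}/(ℓ^{-1})_{r−s}) |Aut(A)|`.
The `ℓ`-rank is encoded by `|A[ℓ]| = ℓ^r` and the `ℓ²`-rank by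
`|(ℓA)[ℓ]| = ℓ^s`. -/
theorem card_aut_add_elementary (ℓ : ℕ) (hℓ : ℓ.Prime)
    (A : Type*) [AddCommGroup A] [Finite A]
    (hℓgrp : ∀ a : A, ∃ n : ℕ, (ℓ ^ n) • a = 0)
    (r s : ℕ)
    (hr : Nat.card {a : A // ℓ • a = 0} = ℓ ^ r)
    (hs : Nat.card {a : A // (∃ b : A, a = ℓ • b) ∧ ℓ • a = 0} = ℓ ^ s)
    (i : ℕ) :
    (Nat.card (AddAut (A × (Fin i → ZMod ℓ))) : ℝ)
      = (ℓ : ℝ) ^ (2 * i * r + i ^ 2) * (lPoch ℓ (r - s + i) / lPoch ℓ (r - s)) *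
        (Nat.card (AddAut A) : ℝ) :=
  card_aut_add_elementary_general ℓ hℓ A r s hr hs i
end

section
/- Let ℓ be an odd prime, ρ ≥ 1, R_ρ = Z/ℓ^ρ, g ≥ 1, and x, y ∈ R_ρ^× with x ≡ y ≡ 1 mod ℓ^ξ and x, y ≢ 1 mod ℓ^{ξ+1} for some 1 ≤ ξ < ρ. Then for every finite abelian ℓ-group A, |{γ ∈ GSp^{(x)}_{2g}(R_ρ) : ker(Id−γ) ≅ A}| = |{γ ∈ GSp^{(y)}_{2g}(R_ρ) : ker(Id−γ) ≅ A}|. -/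
open Matrix

/-- The standard symplectic matrix `J` of size `2g` over `R`. -/
def stdJ (g : ℕ) (R : Type*) [CommRing R] : Matrix (Fin g ⊕ Fin g) (Fin g ⊕ Fin g) R :=
  Matrix.fromBlocks 0 1 (-1) 0

/-!
Since `ℓ` is odd, `(ℤ/ℓ^ρ)ˣ` is cyclic, and `x`, `y` both have order `ℓ^(ρ-ξ)`, so `y = x^m` with
`m` prime to the order of `x`; by Dirichlet `m` may moreover be taken prime to `|GL_{2g}(ℤ/ℓ^ρ)|`
and `|(ℤ/ℓ^ρ)ˣ|`. Then `γ ↦ γ^m` is a bijection from similitudes with multiplier `x` to those with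
multiplier `y`, and it preserves `ker(1 - γ)` because `γ` is in turn a power of `γ^m`.
-/

open Subgroup in
theorem IsCyclic.mem_zpowers_of_orderOf_eq {G : Type*} [Group G] [Finite G] [IsCyclic G]
    {x y : G} (h : orderOf x = orderOf y) : y ∈ zpowers x := by
  classical
  have := Fintype.ofFinite G
  -- `zpowers x` already supplies `orderOf x` roots of `a ^ orderOf x = 1`, the most a cyclic
  -- group has.
  have hsub : (zpowers x : Set G).toFinset ⊆ ({a | a ^ orderOf x = 1} : Finset G) := by
    intro a ha
    obtain ⟨k, rfl⟩ := mem_zpowers_iff.mp (Set.mem_toFinset.mp ha)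
    simp only [Finset.mem_filter, Finset.mem_univ, true_and]
    rw [← zpow_natCast, ← _root_.zpow_mul, mul_comm, _root_.zpow_mul, zpow_natCast,
      pow_orderOf_eq_one, _root_.one_zpow]
  have heq := Finset.eq_of_subset_of_card_le hsub <| by
    rw [Set.toFinset_card, Fintype.card_eq_nat_card, SetLike.coe_sort_coe, Nat.card_zpowers]
    exact IsCyclic.card_pow_eq_one_le (orderOf_pos x)
  have hy : y ∈ ({a | a ^ orderOf x = 1} : Finset G) := by simp [h, pow_orderOf_eq_one]
  simpa [← heq] using hy

theorem IsCyclic.exists_coprime_pow_eq_of_orderOf_eq {G : Type*} [Group G] [Finite G]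
    [IsCyclic G] {x y : G} (h : orderOf x = orderOf y) {N : ℕ} (hN : N ≠ 0) :
    ∃ n, n.Coprime N ∧ x ^ n = y := by
  obtain ⟨k, rfl⟩ := mem_powers_iff_mem_zpowers.mpr (mem_zpowers_of_orderOf_eq h)
  have hk : k.Coprime (orderOf x) := by
    rw [orderOf_pow, eq_comm, Nat.div_eq_self] at h
    simpa [Nat.coprime_comm, (orderOf_pos x).ne'] using h
  obtain ⟨p, hpN, hp, hpk⟩ := Nat.forall_exists_prime_gt_and_modEq N (orderOf_pos x).ne' hk
  refine ⟨p, hp.coprime_iff_not_dvd.mpr fun hdvd => ?_, pow_eq_pow_iff_modEq.mpr hpk⟩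
  exact (Nat.le_of_dvd (Nat.pos_of_ne_zero hN) hdvd).not_gt hpN

theorem ZMod.orderOf_eq_of_depth {ℓ ρ ξ : ℕ} (hℓ : ℓ.Prime) (hℓ2 : ℓ ≠ 2) (hξ : 0 < ξ)
    (hξρ : ξ ≤ ρ) {x : ZMod (ℓ ^ ρ)} (h1 : ∃ d, x = 1 + (ℓ : ZMod (ℓ ^ ρ)) ^ ξ * d)
    (h2 : ¬∃ d, x = 1 + (ℓ : ZMod (ℓ ^ ρ)) ^ (ξ + 1) * d) :
    orderOf x = ℓ ^ (ρ - ξ) := by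
  obtain ⟨n, rfl⟩ := Nat.exists_eq_add_of_le' hξρ
  have : NeZero (ℓ ^ (n + ξ)) := ⟨pow_ne_zero _ hℓ.ne_zero⟩
  obtain ⟨d, rfl⟩ := h1
  have hd : ¬ (ℓ : ℤ) ∣ (d.val : ℤ) := by
    rintro hdvd
    obtain ⟨c, hc⟩ := Int.natCast_dvd_natCast.mp hdvd
    refine h2 ⟨c, ?_⟩
    rw [← ZMod.natCast_zmod_val d, hc]
    push_cast
    ring
  have hℓ3 : 3 ≤ ℓ := by have := hℓ.two_le; omega
  simpa using ZMod.orderOf_one_add_mul_prime_pow hℓ ξ hξ.ne' (by nlinarith) _ hd n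

theorem stdJ_mul_stdJ (g : ℕ) (R : Type*) [CommRing R] : stdJ g R * stdJ g R = -1 := by
  simp [stdJ, fromBlocks_multiply, ← fromBlocks_one, fromBlocks_neg]

theorem isUnit_stdJ (g : ℕ) (R : Type*) [CommRing R] : IsUnit (stdJ g R) :=
  ⟨⟨stdJ g R, -stdJ g R, by rw [mul_neg, stdJ_mul_stdJ, neg_neg],
    by rw [neg_mul, stdJ_mul_stdJ, neg_neg]⟩, rfl⟩

theorem IsUnit.pow_eq_self_of_modEq {M : Type*} [Monoid M] [Finite Mˣ] {u : M} (hu : IsUnit u)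
    {e : ℕ} (he : e ≡ 1 [MOD Nat.card Mˣ]) : u ^ e = u := by
  obtain ⟨v, rfl⟩ := hu
  rw [← Units.val_pow_eq_pow_val, ← pow_mod_natCard, he, pow_mod_natCard, pow_one]

namespace Matrix

variable {ι R : Type*} [Fintype ι] [CommRing R]

/-- For `J = stdJ g R` the similitudes with multiplier `z` form the coset `GSp^{(z)}_{2g}(R)`. -/
def IsSimilitude (J : Matrix ι ι R) (z : R) (γ : Matrix ι ι R) : Prop :=
  γᵀ * J * γ = z • J

namespace IsSimilitude

variable {J γ δ : Matrix ι ι R} {z w : R}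

theorem mul (hγ : IsSimilitude J z γ) (hδ : IsSimilitude J w δ) :
    IsSimilitude J (z * w) (γ * δ) := by
  rw [IsSimilitude, transpose_mul,
    show δᵀ * γᵀ * J * (γ * δ) = δᵀ * (γᵀ * J * γ) * δ by simp only [Matrix.mul_assoc],
    hγ, Matrix.mul_smul, Matrix.smul_mul, hδ, smul_smul]

theorem pow [DecidableEq ι] (hγ : IsSimilitude J z γ) (n : ℕ) :
    IsSimilitude J (z ^ n) (γ ^ n) := by
  induction n with
  | zero => simp [IsSimilitude]
  | succ n ih => simpa only [pow_succ] using ih.mul hγ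

theorem isUnit [DecidableEq ι] (hγ : IsSimilitude J z γ) (hJ : IsUnit J) (hz : IsUnit z) :
    IsUnit γ := by
  rw [isUnit_iff_isUnit_det] at hJ ⊢
  have hdet : IsUnit (γᵀ * J * γ).det := by
    rw [hγ, det_smul]
    exact (hz.pow _).mul hJ
  rw [det_mul, det_mul, det_transpose] at hdet
  exact isUnit_of_mul_isUnit_right hdet

end IsSimilitude

variable [DecidableEq ι]

theorem ker_one_sub_mulVecLin_le_pow (γ : Matrix ι ι R) (n : ℕ) :
    LinearMap.ker (1 - γ).mulVecLin ≤ LinearMap.ker (1 - γ ^ n).mulVecLin := by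
  rw [← geom_sum_mul_neg, mulVecLin_mul]
  exact LinearMap.ker_le_ker_comp _ _

theorem ker_one_sub_pow_mulVecLin_eq {γ : Matrix ι ι R} {a b : ℕ} (h : (γ ^ a) ^ b = γ) :
    LinearMap.ker (1 - γ ^ a).mulVecLin = LinearMap.ker (1 - γ).mulVecLin :=
  le_antisymm (by simpa only [h] using ker_one_sub_mulVecLin_le_pow (γ ^ a) b)
    (ker_one_sub_mulVecLin_le_pow γ a)

def fixedKerSimilitudes (J : Matrix ι ι R) (z : R) (A : Type*) [Add A] : Set (Matrix ι ι R) :=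
  {γ | IsSimilitude J z γ ∧ Nonempty (LinearMap.ker (1 - γ).mulVecLin ≃+ A)}

variable {J : Matrix ι ι R} {A : Type*} [Add A]

theorem pow_mem_fixedKerSimilitudes {γ : Matrix ι ι R} {z : R} {a b : ℕ}
    (hγ : γ ∈ fixedKerSimilitudes J z A) (h : (γ ^ a) ^ b = γ) :
    γ ^ a ∈ fixedKerSimilitudes J (z ^ a) A :=
  ⟨hγ.1.pow a, by rw [ker_one_sub_pow_mulVecLin_eq h]; exact hγ.2⟩

theorem card_fixedKerSimilitudes_pow [Finite R] (hJ : IsUnit J) {z : R} (hz : IsUnit z) {n : ℕ}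
    (hn : n.Coprime (Nat.card (Matrix ι ι R)ˣ * Nat.card Rˣ)) :
    Nat.card (fixedKerSimilitudes J (z ^ n) A) = Nat.card (fixedKerSimilitudes J z A) := by
  obtain ⟨n', -, hnn'⟩ :=
    Nat.exists_mul_mod_eq_of_coprime 1 hn (Nat.mul_pos Nat.card_pos Nat.card_pos).ne'
  have hz' : z ^ (n * n') = z := hz.pow_eq_self_of_modEq (Nat.ModEq.of_mul_left _ hnn')
  have hperiod : ∀ {w : R}, IsUnit w → ∀ γ ∈ fixedKerSimilitudes J w A, γ ^ (n * n') = γ :=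
    fun hw γ hγ => (hγ.1.isUnit hJ hw).pow_eq_self_of_modEq (Nat.ModEq.of_mul_right _ hnn')
  symm
  refine Nat.card_congr
    { toFun := fun γ => ⟨γ ^ n,
        pow_mem_fixedKerSimilitudes γ.2 (by rw [← pow_mul, hperiod hz _ γ.2])⟩
      invFun := fun δ => ⟨δ ^ n', ?_⟩
      left_inv := fun γ => Subtype.ext (by simp only [← pow_mul, hperiod hz _ γ.2])
      right_inv := fun δ => Subtype.ext ?_ }
  · have := pow_mem_fixedKerSimilitudes (a := n') δ.2
      (by rw [← pow_mul, mul_comm, hperiod (hz.pow n) _ δ.2])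
    rwa [← pow_mul, hz'] at this
  · simp only [← pow_mul, mul_comm n', hperiod (hz.pow n) _ δ.2]

end Matrix

theorem card_ker_iso_eq_of_same_depth_general (ℓ : ℕ) (hℓ : ℓ.Prime) (hodd : Odd ℓ)
    (ρ g ξ : ℕ) (hξ : 0 < ξ) (hξρ : ξ < ρ)
    (x y : (ZMod (ℓ ^ ρ))ˣ)
    (hx1 : ∃ d, (x : ZMod (ℓ ^ ρ)) = 1 + (ℓ : ZMod (ℓ ^ ρ)) ^ ξ * d)
    (hx2 : ¬∃ d, (x : ZMod (ℓ ^ ρ)) = 1 + (ℓ : ZMod (ℓ ^ ρ)) ^ (ξ + 1) * d)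
    (hy1 : ∃ d, (y : ZMod (ℓ ^ ρ)) = 1 + (ℓ : ZMod (ℓ ^ ρ)) ^ ξ * d)
    (hy2 : ¬∃ d, (y : ZMod (ℓ ^ ρ)) = 1 + (ℓ : ZMod (ℓ ^ ρ)) ^ (ξ + 1) * d)
    (A : Type*) [AddCommGroup A] :
    Nat.card {γ : Matrix (Fin g ⊕ Fin g) (Fin g ⊕ Fin g) (ZMod (ℓ ^ ρ)) //
        γᵀ * stdJ g (ZMod (ℓ ^ ρ)) * γ = (x : ZMod (ℓ ^ ρ)) • stdJ g (ZMod (ℓ ^ ρ)) ∧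
        Nonempty (LinearMap.ker ((1 - γ).mulVecLin) ≃+ A)}
      = Nat.card {γ : Matrix (Fin g ⊕ Fin g) (Fin g ⊕ Fin g) (ZMod (ℓ ^ ρ)) //
        γᵀ * stdJ g (ZMod (ℓ ^ ρ)) * γ = (y : ZMod (ℓ ^ ρ)) • stdJ g (ZMod (ℓ ^ ρ)) ∧
        Nonempty (LinearMap.ker ((1 - γ).mulVecLin) ≃+ A)} := by
  have : NeZero (ℓ ^ ρ) := ⟨pow_ne_zero _ hℓ.ne_zero⟩
  have hℓ2 : ℓ ≠ 2 := hodd.ne_two_of_dvd_nat dvd_rfl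
  have : IsCyclic (ZMod (ℓ ^ ρ))ˣ := ZMod.isCyclic_units_of_prime_pow ℓ hℓ hℓ2 ρ
  have hord : orderOf x = orderOf y := by
    rw [← orderOf_units, ← orderOf_units, ZMod.orderOf_eq_of_depth hℓ hℓ2 hξ hξρ.le hx1 hx2,
      ZMod.orderOf_eq_of_depth hℓ hℓ2 hξ hξρ.le hy1 hy2]
  obtain ⟨n, hn, rfl⟩ := IsCyclic.exists_coprime_pow_eq_of_orderOf_eq hord (N :=
    Nat.card (Matrix (Fin g ⊕ Fin g) (Fin g ⊕ Fin g) (ZMod (ℓ ^ ρ)))ˣ * Nat.card (ZMod (ℓ ^ ρ))ˣ)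
    (Nat.mul_pos Nat.card_pos Nat.card_pos).ne'
  rw [Units.val_pow_eq_pow_val]
  exact (card_fixedKerSimilitudes_pow (isUnit_stdJ g _) x.isUnit hn).symm

/-- If `x, y ∈ (Z/ℓ^ρ)^×` both satisfy `x ≡ 1 (mod ℓ^ξ)` and
`x ≢ 1 (mod ℓ^{ξ+1})`, then for every finite abelian `ℓ`-group `A` the number
of symplectic similitudes with multiplier `x` whose fixed-point kernel
`ker(Id−γ)` is isomorphic to `A` equals the corresponding number for `y`. -/
theorem card_ker_iso_eq_of_same_depth (ℓ : ℕ) (hℓ : ℓ.Prime) (hodd : Odd ℓ)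
    (ρ g ξ : ℕ) (hg : 0 < g) (hξ : 0 < ξ) (hξρ : ξ < ρ)
    (x y : (ZMod (ℓ ^ ρ))ˣ)
    (hx1 : ∃ d, (x : ZMod (ℓ ^ ρ)) = 1 + (ℓ : ZMod (ℓ ^ ρ)) ^ ξ * d)
    (hx2 : ¬∃ d, (x : ZMod (ℓ ^ ρ)) = 1 + (ℓ : ZMod (ℓ ^ ρ)) ^ (ξ + 1) * d)
    (hy1 : ∃ d, (y : ZMod (ℓ ^ ρ)) = 1 + (ℓ : ZMod (ℓ ^ ρ)) ^ ξ * d)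
    (hy2 : ¬∃ d, (y : ZMod (ℓ ^ ρ)) = 1 + (ℓ : ZMod (ℓ ^ ρ)) ^ (ξ + 1) * d)
    (A : Type*) [AddCommGroup A] [Finite A]
    (hℓgrp : ∀ a : A, ∃ n : ℕ, (ℓ ^ n) • a = 0) :
    Nat.card {γ : Matrix (Fin g ⊕ Fin g) (Fin g ⊕ Fin g) (ZMod (ℓ ^ ρ)) //
        γᵀ * stdJ g (ZMod (ℓ ^ ρ)) * γ = (x : ZMod (ℓ ^ ρ)) • stdJ g (ZMod (ℓ ^ ρ)) ∧
        Nonempty (LinearMap.ker ((1 - γ).mulVecLin) ≃+ A)}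
      = Nat.card {γ : Matrix (Fin g ⊕ Fin g) (Fin g ⊕ Fin g) (ZMod (ℓ ^ ρ)) //
        γᵀ * stdJ g (ZMod (ℓ ^ ρ)) * γ = (y : ZMod (ℓ ^ ρ)) • stdJ g (ZMod (ℓ ^ ρ)) ∧
        Nonempty (LinearMap.ker ((1 - γ).mulVecLin) ≃+ A)} :=
  card_ker_iso_eq_of_same_depth_general ℓ hℓ hodd ρ g ξ hξ hξρ x y hx1 hx2 hy1 hy2 A
end

section
/- Let ℓ be an odd prime, q = ℓ^{-1}, r ≥ s ≥ 0 integers, k = r − s. Then Σ_{i=s}^r (−1)^{i−s}·ℓ^{r(r−1)/2 + s(s+1)/2 − i}·[r−s choose r−i]_{ℓ^{-1}} = ℓ^{r(r−1)/2 + s(s−1)/2}·(ℓ^{-1}; ℓ^{-2})_{⌈(r−s)/2⌉}. -/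
/-- `(q;q)_m = ∏_{j=1}^m (1 − q^j)`. -/
noncomputable def qPoch (q : ℝ) (m : ℕ) : ℝ := ∏ j ∈ Finset.range m, (1 - q ^ (j + 1))

/-- The Gaussian (`q`-binomial) coefficient `[k choose i]_q`. -/
noncomputable def qBinom (q : ℝ) (k i : ℕ) : ℝ := qPoch q k / (qPoch q i * qPoch q (k - i))

open Finset

section helpers
variable {q : ℝ}

lemma one_sub_pow_ne (hq0 : 0 < q) (hq1 : q < 1) (m : ℕ) : (1 - q ^ (m+1)) ≠ 0 := by
  have : q ^ (m+1) < 1 := pow_lt_one₀ hq0.le hq1 (Nat.succ_ne_zero m)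
  intro h; linarith

lemma qPoch_pos (hq0 : 0 < q) (hq1 : q < 1) (m : ℕ) : 0 < qPoch q m := by
  refine Finset.prod_pos fun j _ => ?_
  have : q ^ (j+1) < 1 := pow_lt_one₀ hq0.le hq1 (Nat.succ_ne_zero j)
  linarith

lemma qPoch_ne (hq0 : 0 < q) (hq1 : q < 1) (m : ℕ) : qPoch q m ≠ 0 :=
  (qPoch_pos hq0 hq1 m).ne'

lemma qPoch_succ (m : ℕ) : qPoch q (m+1) = qPoch q m * (1 - q ^ (m+1)) :=
  Finset.prod_range_succ _ _

lemma qPoch_zero : qPoch q 0 = 1 := Finset.prod_range_zero _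

lemma qBinom_zero (hq0 : 0 < q) (hq1 : q < 1) (k : ℕ) : qBinom q k 0 = 1 := by
  simp [qBinom, qPoch_zero, div_self (qPoch_ne hq0 hq1 k)]

lemma qBinom_self (hq0 : 0 < q) (hq1 : q < 1) (k : ℕ) : qBinom q k k = 1 := by
  simp [qBinom, qPoch_zero, div_self (qPoch_ne hq0 hq1 k)]

lemma qBinom_symm {k j : ℕ} (h : j ≤ k) : qBinom q k (k - j) = qBinom q k j := by
  have : k - (k - j) = j := by omega
  rw [qBinom, this, qBinom, mul_comm]

lemma qBinom_pascalA (hq0 : 0 < q) (hq1 : q < 1) {n i : ℕ} (hi1 : 1 ≤ i) (hi2 : i ≤ n) :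
    qBinom q (n+1) i = qBinom q n (i-1) + q ^ i * qBinom q n i := by
  obtain ⟨m, rfl⟩ : ∃ m, i = m + 1 := ⟨i - 1, by omega⟩
  obtain ⟨t, rfl⟩ : ∃ t, n = m + 1 + t := ⟨n - (m+1), by omega⟩
  simp only [qBinom]
  have e1 : m + 1 + t + 1 - (m+1) = t + 1 := by omega
  have e2 : m + 1 - 1 = m := by omega
  have e3 : m + 1 + t - m = t + 1 := by omega
  have e4 : m + 1 + t - (m+1) = t := by omega
  rw [e1, e2, e3, e4, show m+1+t+1 = (m+1+t)+1 from rfl, qPoch_succ (m+1+t),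
    qPoch_succ m, qPoch_succ t]
  have h1 := qPoch_ne hq0 hq1 m
  have h2 := qPoch_ne hq0 hq1 t
  have h3 := qPoch_ne hq0 hq1 (m+1+t)
  have h4 := one_sub_pow_ne hq0 hq1 m
  have h5 := one_sub_pow_ne hq0 hq1 t
  field_simp
  ring

lemma qBinom_pascalB (hq0 : 0 < q) (hq1 : q < 1) {n i : ℕ} (hi1 : 1 ≤ i) (hi2 : i ≤ n) :
    qBinom q (n+1) i = q ^ (n+1-i) * qBinom q n (i-1) + qBinom q n i := by
  obtain ⟨m, rfl⟩ : ∃ m, i = m + 1 := ⟨i - 1, by omega⟩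
  obtain ⟨t, rfl⟩ : ∃ t, n = m + 1 + t := ⟨n - (m+1), by omega⟩
  simp only [qBinom]
  have e1 : m + 1 + t + 1 - (m+1) = t + 1 := by omega
  have e2 : m + 1 - 1 = m := by omega
  have e3 : m + 1 + t - m = t + 1 := by omega
  have e4 : m + 1 + t - (m+1) = t := by omega
  rw [e1, e2, e3, e4, show m+1+t+1 = (m+1+t)+1 from rfl, qPoch_succ (m+1+t),
    qPoch_succ m, qPoch_succ t]
  have h1 := qPoch_ne hq0 hq1 m
  have h2 := qPoch_ne hq0 hq1 t
  have h3 := qPoch_ne hq0 hq1 (m+1+t)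
  have h4 := one_sub_pow_ne hq0 hq1 m
  have h5 := one_sub_pow_ne hq0 hq1 t
  field_simp
  ring

end helpers

/-- `F k = Σ_{j=0}^k (−1)^j q^j [k choose j]_q`. -/
noncomputable def Fsum (q : ℝ) (k : ℕ) : ℝ :=
  ∑ j ∈ Finset.range (k+1), (-1)^j * q^j * qBinom q k j

/-- `H k = Σ_{j=0}^k (−1)^j [k choose j]_q`. -/
noncomputable def Hsum (q : ℝ) (k : ℕ) : ℝ :=
  ∑ j ∈ Finset.range (k+1), (-1)^j * qBinom q k j

/-- `(q; q²)_{⌈k/2⌉}`. -/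
noncomputable def Pprod (q : ℝ) (k : ℕ) : ℝ :=
  ∏ j ∈ Finset.range ((k+1)/2), (1 - q^(2*j+1))

section recs
variable {q : ℝ}

lemma Hsum_rec (hq0 : 0 < q) (hq1 : q < 1) (k : ℕ) :
    Hsum q (k+1) = Fsum q k - Hsum q k := by
  have key : Hsum q (k+1)
      = ∑ j ∈ range (k+1), (-1:ℝ)^j * q^j * qBinom q k j
        + ∑ j ∈ range (k+1), (-1:ℝ)^(j+1) * qBinom q k j := by
    rw [Hsum, Finset.sum_range_succ' (fun j => (-1:ℝ)^j * qBinom q (k+1) j),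
      Finset.sum_range_succ (fun j => (-1:ℝ)^(j+1) * qBinom q (k+1) (j+1))]
    rw [Finset.sum_range_succ' (fun j => (-1:ℝ)^j * q^j * qBinom q k j),
      Finset.sum_range_succ (fun j => (-1:ℝ)^(j+1) * qBinom q k j)]
    have mid : ∀ j ∈ range k, (-1:ℝ)^(j+1) * qBinom q (k+1) (j+1)
        = (-1:ℝ)^(j+1) * q^(j+1) * qBinom q k (j+1) + (-1:ℝ)^(j+1) * qBinom q k j := by
      intro j hj
      rw [Finset.mem_range] at hj
      rw [qBinom_pascalA hq0 hq1 (by omega : 1 ≤ j+1) (by omega : j+1 ≤ k)]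
      simp only [Nat.add_sub_cancel]
      ring
    rw [Finset.sum_congr rfl mid, Finset.sum_add_distrib]
    simp only [qBinom_zero hq0 hq1, qBinom_self hq0 hq1]
    ring
  rw [key, Hsum, Fsum]
  have : ∑ j ∈ range (k+1), (-1:ℝ)^(j+1) * qBinom q k j
      = - ∑ j ∈ range (k+1), (-1:ℝ)^j * qBinom q k j := by
    rw [← Finset.sum_neg_distrib]
    exact Finset.sum_congr rfl fun j _ => by ring
  rw [this]; ring

lemma Fsum_rec (hq0 : 0 < q) (hq1 : q < 1) (k : ℕ) :
    Fsum q (k+1) = Fsum q k - q^(k+1) * Hsum q k := by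
  have key : Fsum q (k+1)
      = ∑ j ∈ range (k+1), (-1:ℝ)^j * q^j * qBinom q k j
        + ∑ j ∈ range (k+1), (-1:ℝ)^(j+1) * q^(k+1) * qBinom q k j := by
    rw [Fsum, Finset.sum_range_succ' (fun j => (-1:ℝ)^j * q^j * qBinom q (k+1) j),
      Finset.sum_range_succ (fun j => (-1:ℝ)^(j+1) * q^(j+1) * qBinom q (k+1) (j+1))]
    rw [Finset.sum_range_succ' (fun j => (-1:ℝ)^j * q^j * qBinom q k j),
      Finset.sum_range_succ (fun j => (-1:ℝ)^(j+1) * q^(k+1) * qBinom q k j)]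
    have mid : ∀ j ∈ range k, (-1:ℝ)^(j+1) * q^(j+1) * qBinom q (k+1) (j+1)
        = (-1:ℝ)^(j+1) * q^(j+1) * qBinom q k (j+1)
          + (-1:ℝ)^(j+1) * q^(k+1) * qBinom q k j := by
      intro j hj
      rw [Finset.mem_range] at hj
      rw [qBinom_pascalB hq0 hq1 (by omega : 1 ≤ j+1) (by omega : j+1 ≤ k)]
      simp only [Nat.add_sub_cancel]
      have : (k+1) - (j+1) = k - j := by omega
      rw [this]
      have hpow : q^(k+1) = q^(j+1) * q^(k-j) := by
        rw [← pow_add]; congr 1; omega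
      rw [hpow]
      ring
    rw [Finset.sum_congr rfl mid, Finset.sum_add_distrib]
    simp only [qBinom_zero hq0 hq1, qBinom_self hq0 hq1]
    ring
  rw [key, Fsum, Hsum]
  have : ∑ j ∈ range (k+1), (-1:ℝ)^(j+1) * q^(k+1) * qBinom q k j
      = - (q^(k+1) * ∑ j ∈ range (k+1), (-1:ℝ)^j * qBinom q k j) := by
    rw [Finset.mul_sum, ← Finset.sum_neg_distrib]
    exact Finset.sum_congr rfl fun j _ => by ring
  rw [this]; ring

lemma Pprod_succ_even {k : ℕ} (h : Even k) :
    Pprod q (k+1) = Pprod q k * (1 - q^(k+1)) := by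
  obtain ⟨m, rfl⟩ := h
  rw [Pprod, Pprod, show (m+m+1+1)/2 = m+1 by omega, show (m+m+1)/2 = m by omega,
    Finset.prod_range_succ, show 2*m+1 = m+m+1 by omega]

lemma Pprod_succ_odd {k : ℕ} (h : Odd k) : Pprod q (k+1) = Pprod q k := by
  obtain ⟨m, rfl⟩ := h
  rw [Pprod, Pprod, show (2*m+1+1+1)/2 = m+1 by omega, show (2*m+1+1)/2 = m+1 by omega]

lemma FH (hq0 : 0 < q) (hq1 : q < 1) (k : ℕ) :
    Fsum q k = Pprod q k ∧ Hsum q k = if Even k then Pprod q k else 0 := by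
  induction k with
  | zero =>
    have h0 : qBinom q 0 0 = 1 := qBinom_zero hq0 hq1 0
    constructor <;> simp [Fsum, Hsum, Pprod, h0]
  | succ k ih =>
    obtain ⟨hF, hH⟩ := ih
    rcases Nat.even_or_odd k with he | ho
    · have hne : ¬ Even (k+1) := by simp [Nat.even_add_one, he]
      rw [if_pos he] at hH
      refine ⟨?_, ?_⟩
      · rw [Fsum_rec hq0 hq1, hF, hH, Pprod_succ_even he]; ring
      · rw [Hsum_rec hq0 hq1, hF, hH, if_neg hne]; ring
    · have hek : ¬ Even k := by
        rcases ho with ⟨m, rfl⟩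
        simp [Nat.even_add_one, parity_simps]
      have he1 : Even (k+1) := Nat.even_add_one.mpr hek
      rw [if_neg hek] at hH
      refine ⟨?_, ?_⟩
      · rw [Fsum_rec hq0 hq1, hF, hH, Pprod_succ_odd ho]; ring
      · rw [Hsum_rec hq0 hq1, hF, hH, if_pos he1, Pprod_succ_odd ho]; ring

end recs

lemma tri_succ (s : ℕ) : s*(s+1)/2 = s*(s-1)/2 + s := by
  rcases s with _ | t
  · simp
  · have h1 : (t+1)*(t+1+1) = t*(t+1) + 2*(t+1) := by ring
    have h2 : t*(t+1) = 2*(t*(t+1)/2) :=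
      (Nat.two_mul_div_two_of_even (Nat.even_mul_succ_self t)).symm
    have h3 : (t+1)*t = t*(t+1) := Nat.mul_comm _ _
    simp only [Nat.add_sub_cancel]
    rw [h1, h3]
    omega

/-- For an odd prime `ℓ`, `q = ℓ^{-1}` and integers `r ≥ s ≥ 0`:
`Σ_{i=s}^r (−1)^{i−s} ℓ^{r(r−1)/2 + s(s+1)/2 − i} [r−s choose r−i]_{ℓ^{-1}}
  = ℓ^{r(r−1)/2 + s(s−1)/2} (ℓ^{-1}; ℓ^{-2})_{⌈(r−s)/2⌉}`. -/
theorem qbinom_sum_identity (ℓ : ℕ) (hℓ : ℓ.Prime) (hodd : Odd ℓ)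
    (r s : ℕ) (hrs : s ≤ r) :
    ∑ i ∈ Finset.Icc s r,
      (-1 : ℝ) ^ (i - s) *
        (ℓ : ℝ) ^ (((r * (r - 1) / 2 + s * (s + 1) / 2 : ℕ) : ℤ) - (i : ℤ)) *
        qBinom ((ℓ : ℝ))⁻¹ (r - s) (r - i)
    = (ℓ : ℝ) ^ (r * (r - 1) / 2 + s * (s - 1) / 2) *
      ∏ j ∈ Finset.range ((r - s + 1) / 2), (1 - ((ℓ : ℝ))⁻¹ ^ (2 * j + 1)) := by
  have hℓ2 : (2:ℝ) ≤ (ℓ:ℝ) := by exact_mod_cast hℓ.two_le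
  have hℓpos : (0:ℝ) < (ℓ:ℝ) := by linarith
  have hℓne : (ℓ:ℝ) ≠ 0 := hℓpos.ne'
  set q : ℝ := ((ℓ:ℝ))⁻¹ with hqdef
  have hq0 : 0 < q := inv_pos.mpr hℓpos
  have hq1 : q < 1 := by
    rw [hqdef, inv_lt_one_iff₀]; right; linarith
  set k := r - s with hk
  set E := r * (r - 1) / 2 + s * (s - 1) / 2 with hE
  have hEs : r * (r - 1) / 2 + s * (s + 1) / 2 = E + s := by
    rw [hE, tri_succ s]; ring
  have hzp : ∀ j : ℕ, (ℓ:ℝ) ^ ((E:ℤ) - (j:ℤ)) = (ℓ:ℝ)^E * q^j := by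
    intro j
    rw [zpow_sub₀ hℓne, zpow_natCast, zpow_natCast, div_eq_mul_inv, ← inv_pow]
  rw [← Finset.Ico_add_one_right_eq_Icc, Finset.sum_Ico_eq_sum_range, show r + 1 - s = k + 1 by omega]
  have hterm : ∀ j ∈ Finset.range (k+1),
      (-1 : ℝ) ^ (s + j - s) *
        (ℓ : ℝ) ^ (((r * (r - 1) / 2 + s * (s + 1) / 2 : ℕ) : ℤ) - ((s + j : ℕ) : ℤ)) *
        qBinom q (r - s) (r - (s + j))
      = (ℓ:ℝ)^E * ((-1:ℝ)^j * q^j * qBinom q k j) := by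
    intro j hj
    rw [Finset.mem_range] at hj
    have hje : j ≤ k := by omega
    have hxp : ((r * (r - 1) / 2 + s * (s + 1) / 2 : ℕ) : ℤ) - ((s + j : ℕ) : ℤ)
        = (E:ℤ) - (j:ℤ) := by rw [hEs]; push_cast; ring
    rw [show s + j - s = j by omega, show r - (s + j) = k - j by omega,
      qBinom_symm hje, hxp, hzp j]
    ring
  rw [Finset.sum_congr rfl hterm, ← Finset.mul_sum]
  have hFk := (FH hq0 hq1 k).1
  rw [Fsum] at hFk
  rw [hFk]
  rfl
end
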